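/- arXiv:1204.1686 — 9 statements merged into one kernel-verified Lean document; each statement's English description precedes it below -/
import Mathlib

section
/- Let q = (q_0,…,q_n) be a weight and p = (2q_0,…,2q_n). If q_j is odd, then for any w ∈ ℝ^{n+1}∖{0} with w_j ≠ 0, the set of ∼_p-equivalence classes of points z with z ∼_q w has exactly two elements; i.e., the identity-induced map ℝP(p) → ℝP(q) is exactly two-to-one on the set where the j-th coordinate is nonzero. -/
/-!
Over `ℝ`, the nonzero squares are exactly the positive reals, so `z ∼_{2q} w` means that
`w = λ • z` for the `q`-action of some `λ > 0`. Hence the `∼_q`-class of `w` splits into at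
most two `∼_{2q}`-classes, those of `w` and of `(-1) • w`. They differ because an odd `q j`
gives `((-1) • w) j = -w j`, which no positive `λ` can reach from `w j ≠ 0`.
-/

/-- Weighted equivalence relation on `ℝ^{n+1}`. -/
def wrel {n : ℕ} (p : Fin (n + 1) → ℕ) (z w : Fin (n + 1) → ℝ) : Prop :=
  ∃ l : ℝ, l ≠ 0 ∧ ∀ i, w i = l ^ p i * z i

def weightedNeg {n : ℕ} (q : Fin (n + 1) → ℕ) (w : Fin (n + 1) → ℝ) : Fin (n + 1) → ℝ :=
  fun i => (-1 : ℝ) ^ q i * w i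

section

variable {n : ℕ} (q : Fin (n + 1) → ℕ)

theorem wrel_two_mul_iff {z w : Fin (n + 1) → ℝ} :
    wrel (fun i => 2 * q i) z w ↔ ∃ l : ℝ, 0 < l ∧ ∀ i, w i = l ^ q i * z i := by
  constructor
  · rintro ⟨l, hl, h⟩
    exact ⟨l ^ 2, by positivity, fun i => by rw [h i, pow_mul]⟩
  · rintro ⟨l, hl, h⟩
    refine ⟨√l, (Real.sqrt_pos.mpr hl).ne', fun i => ?_⟩
    rw [h i, pow_mul, Real.sq_sqrt hl.le]

theorem wrel_weightedNeg (w : Fin (n + 1) → ℝ) : wrel q (weightedNeg q w) w := by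
  refine ⟨-1, by norm_num, fun i => ?_⟩
  rw [weightedNeg, ← mul_assoc, ← pow_add, Even.neg_one_pow ⟨q i, rfl⟩, one_mul]

theorem not_wrel_two_mul_weightedNeg {j : Fin (n + 1)} (hodd : Odd (q j))
    {w : Fin (n + 1) → ℝ} (hwj : w j ≠ 0) :
    ¬ wrel (fun i => 2 * q i) w (weightedNeg q w) := by
  rw [wrel_two_mul_iff]
  rintro ⟨l, hl, h⟩
  have hlj : l ^ q j = -1 := by
    have := h j
    rw [weightedNeg, hodd.neg_one_pow] at this
    exact (mul_right_cancel₀ hwj this).symm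
  linarith [pow_pos hl (q j)]

theorem wrel_two_mul_or_wrel_two_mul_weightedNeg {z w : Fin (n + 1) → ℝ} (h : wrel q z w) :
    wrel (fun i => 2 * q i) z w ∨ wrel (fun i => 2 * q i) z (weightedNeg q w) := by
  simp only [wrel_two_mul_iff]
  obtain ⟨l, hl, h⟩ := h
  rcases hl.lt_or_gt with hneg | hpos
  · refine .inr ⟨-l, neg_pos.mpr hneg, fun i => ?_⟩
    rw [weightedNeg, h i, neg_pow]
    ring
  · exact .inl ⟨l, hpos, h⟩

end

theorem two_to_one_on_nonzero_coord_general (n : ℕ) (q : Fin (n + 1) → ℕ)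
    (j : Fin (n + 1)) (hodd : Odd (q j))
    (w : Fin (n + 1) → ℝ) (hwj : w j ≠ 0) :
    ∃ z₁ z₂ : Fin (n + 1) → ℝ,
      wrel q z₁ w ∧ wrel q z₂ w ∧ ¬ wrel (fun i => 2 * q i) z₁ z₂ ∧
      ∀ z : Fin (n + 1) → ℝ, wrel q z w →
        wrel (fun i => 2 * q i) z z₁ ∨ wrel (fun i => 2 * q i) z z₂ :=
  ⟨w, weightedNeg q w, ⟨1, one_ne_zero, by simp⟩, wrel_weightedNeg q w,
    not_wrel_two_mul_weightedNeg q hodd hwj,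
    fun _ hz => wrel_two_mul_or_wrel_two_mul_weightedNeg q hz⟩

/-- Let `q` be a weight and `p = 2q`.  If `q j` is odd, then for any `w ≠ 0` with
`w j ≠ 0`, the set of `∼_p`-classes of points `z` with `z ∼_q w` has exactly two
elements: the identity-induced map `ℝP(p) → ℝP(q)` is two-to-one where the `j`-th
coordinate is nonzero. -/
theorem two_to_one_on_nonzero_coord (n : ℕ) (q : Fin (n + 1) → ℕ) (hq : ∀ i, 0 < q i)
    (j : Fin (n + 1)) (hodd : Odd (q j))
    (w : Fin (n + 1) → ℝ) (hw : w ≠ 0) (hwj : w j ≠ 0) :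
    ∃ z₁ z₂ : Fin (n + 1) → ℝ,
      wrel q z₁ w ∧ wrel q z₂ w ∧ ¬ wrel (fun i => 2 * q i) z₁ z₂ ∧
      ∀ z : Fin (n + 1) → ℝ, wrel q z w →
        wrel (fun i => 2 * q i) z z₁ ∨ wrel (fun i => 2 * q i) z z₂ :=
  two_to_one_on_nonzero_coord_general n q j hodd w hwj
end

section
/- Let m be a positive integer and q_0 relatively prime to m, and let p = (q_0, m q_1, …, m q_n), q = (q_0, q_1, …, q_n). The map f: ℂP(p) → ℂP(q) induced by (z_0, z_1, …, z_n) ↦ (z_0^m, z_1, …, z_n) is injective: if there exists λ ∈ ℂ∖{0} with (λ^{q_0} z_0^m, λ^{q_1} z_1, …, λ^{q_n} z_n) = ((z'_0)^m, z'_1, …, z'_n), then there exists μ ∈ ℂ∖{0} with (μ^{q_0} z_0, μ^{m q_1} z_1, …, μ^{m q_n} z_n) = (z'_0, …, z'_n). -/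
/-!
Let `ρ` be an `m`-th root of the scaling factor `λ`. Comparing `m`-th powers of the `0`-th
coordinates shows `z'₀ = ω ρ^{q₀} z₀` for an `m`-th root of unity `ω`; since `q₀` is prime
to `m`, `ω = ζ^{q₀}` for another `m`-th root of unity `ζ`, and `μ = ζ ρ` is still an `m`-th
root of `λ`, so it rescales the remaining coordinates as `λ` does.
-/

theorem exists_pow_eq_one_and_eq_mul_of_pow_eq_pow {K : Type*} [CommGroupWithZero K]
    {m : ℕ} (hm : m ≠ 0) {x y : K} (h : x ^ m = y ^ m) : ∃ ω : K, ω ^ m = 1 ∧ y = ω * x := by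
  by_cases hx : x = 0
  · have hy : y = 0 := pow_eq_zero_iff hm |>.mp (by rw [← h, hx, zero_pow hm])
    exact ⟨1, one_pow m, by rw [hx, hy, mul_zero]⟩
  · refine ⟨y / x, ?_, (div_mul_cancel₀ y hx).symm⟩
    rw [div_pow, ← h, div_self (pow_ne_zero m hx)]

theorem exists_pow_eq_one_and_pow_eq_of_coprime {M : Type*} [Monoid M] {m q : ℕ} {ω : M}
    (hω : ω ^ m = 1) (hq : q.Coprime m) : ∃ ζ : M, ζ ^ m = 1 ∧ ζ ^ q = ω := by
  obtain ⟨k, hk⟩ :=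
    exists_pow_eq_self_of_coprime (hq.coprime_dvd_right (orderOf_dvd_of_pow_eq_one hω))
  refine ⟨ω ^ k, ?_, ?_⟩
  · rw [← pow_mul, mul_comm, pow_mul, hω, one_pow]
  · rw [← pow_mul, mul_comm, pow_mul, hk]

theorem IsAlgClosed.exists_pow_eq_and_pow_mul_eq {K : Type*} [Field K] [IsAlgClosed K]
    {m q : ℕ} (hm : 0 < m) (hcop : m.Coprime q) {l x y : K} (h : l ^ q * x ^ m = y ^ m) :
    ∃ μ : K, μ ^ m = l ∧ μ ^ q * x = y := by
  obtain ⟨ρ, hρ⟩ := IsAlgClosed.exists_pow_nat_eq l hm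
  have hρx : (ρ ^ q * x) ^ m = y ^ m := by rw [mul_pow, ← pow_mul, mul_comm q m, pow_mul, hρ, h]
  obtain ⟨ω, hωm, hy⟩ := exists_pow_eq_one_and_eq_mul_of_pow_eq_pow hm.ne' hρx
  obtain ⟨ζ, hζm, hζq⟩ := exists_pow_eq_one_and_pow_eq_of_coprime hωm hcop.symm
  refine ⟨ζ * ρ, by rw [mul_pow, hζm, one_mul, hρ], ?_⟩
  rw [mul_pow, hζq, mul_assoc, hy]

theorem complex_power_map_injective_general (n m : ℕ) (hm : 0 < m)
    (q : Fin (n + 1) → ℕ) (hcop : Nat.gcd m (q 0) = 1)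
    (z z' : Fin (n + 1) → ℂ)
    (h : ∃ l : ℂ, l ≠ 0 ∧ l ^ q 0 * (z 0) ^ m = (z' 0) ^ m ∧
      ∀ j, j ≠ 0 → l ^ q j * z j = z' j) :
    ∃ mu : ℂ, mu ≠ 0 ∧ mu ^ q 0 * z 0 = z' 0 ∧
      ∀ j, j ≠ 0 → mu ^ (m * q j) * z j = z' j := by
  obtain ⟨l, hl, h0, hj⟩ := h
  obtain ⟨μ, hμl, hμ0⟩ := IsAlgClosed.exists_pow_eq_and_pow_mul_eq hm hcop h0
  refine ⟨μ, ?_, hμ0, fun j hj0 => ?_⟩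
  · rintro rfl
    exact hl (by rw [← hμl, zero_pow hm.ne'])
  · rw [pow_mul, hμl]
    exact hj j hj0

/-- Injectivity of the map `ℂP(q₀, m q₁, …, m qₙ) → ℂP(q₀, …, qₙ)` induced by
`(z₀, z₁, …, zₙ) ↦ (z₀^m, z₁, …, zₙ)`, when `gcd(m, q₀) = 1`. -/
theorem complex_power_map_injective (n m : ℕ) (hm : 0 < m)
    (q : Fin (n + 1) → ℕ) (hq : ∀ i, 0 < q i) (hcop : Nat.gcd m (q 0) = 1)
    (z z' : Fin (n + 1) → ℂ) (hz : z ≠ 0) (hz' : z' ≠ 0)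
    (h : ∃ l : ℂ, l ≠ 0 ∧ l ^ q 0 * (z 0) ^ m = (z' 0) ^ m ∧
      ∀ j, j ≠ 0 → l ^ q j * z j = z' j) :
    ∃ mu : ℂ, mu ≠ 0 ∧ mu ^ q 0 * z 0 = z' 0 ∧
      ∀ j, j ≠ 0 → mu ^ (m * q j) * z j = z' j :=
  complex_power_map_injective_general n m hm q hcop z z' h
end

section
/- Let m be an odd positive integer, p = (q_0, m q_1, …, m q_n), q = (q_0, …, q_n). For z, z' ∈ ℝ^{n+1}∖{0}: if there exists λ ∈ ℝ∖{0} with (λ^{q_0} z_0^m, λ^{q_1} z_1, …, λ^{q_n} z_n) = ((z'_0)^m, z'_1, …, z'_n), then there exists μ ∈ ℝ∖{0} with μ^{q_0} z_0 = z'_0 and μ^{m q_j} z_j = z'_j for j = 1,…,n. -/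
/-!
Take `μ` to be the real `m`-th root of `λ`, which exists because `m` is odd. Then `μ^(m qⱼ) = λ^(qⱼ)`
handles `j ≠ 0`, and `(μ^(q₀) z₀)^m = λ^(q₀) z₀^m = z₀'^m` gives `μ^(q₀) z₀ = z₀'` since odd powers
are injective on `ℝ`.
-/

theorem Real.surjective_pow_of_odd {m : ℕ} (hm : Odd m) :
    Function.Surjective fun x : ℝ => x ^ m := by
  intro y
  rcases le_or_gt 0 y with hy | hy
  · exact ⟨y ^ (m : ℝ)⁻¹, Real.rpow_inv_natCast_pow hy hm.pos.ne'⟩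
  · refine ⟨-(-y) ^ (m : ℝ)⁻¹, ?_⟩
    show (-(-y) ^ (m : ℝ)⁻¹) ^ m = y
    rw [hm.neg_pow, Real.rpow_inv_natCast_pow (neg_nonneg.mpr hy.le) hm.pos.ne', neg_neg]

theorem real_power_map_injective_odd_general (n m : ℕ) (hmodd : Odd m)
    (q : Fin (n + 1) → ℕ)
    (z z' : Fin (n + 1) → ℝ)
    (h : ∃ l : ℝ, l ≠ 0 ∧ l ^ q 0 * (z 0) ^ m = (z' 0) ^ m ∧
      ∀ j, j ≠ 0 → l ^ q j * z j = z' j) :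
    ∃ mu : ℝ, mu ≠ 0 ∧ mu ^ q 0 * z 0 = z' 0 ∧
      ∀ j, j ≠ 0 → mu ^ (m * q j) * z j = z' j := by
  obtain ⟨l, hl, h0, hj⟩ := h
  obtain ⟨mu, hmu : mu ^ m = l⟩ := Real.surjective_pow_of_odd hmodd l
  have hmu0 : mu ≠ 0 := by
    rintro rfl
    exact hl (by rw [← hmu, zero_pow hmodd.pos.ne'])
  refine ⟨mu, hmu0, hmodd.strictMono_pow.injective ?_, fun j hj0 => ?_⟩
  · calc (mu ^ q 0 * z 0) ^ m = (mu ^ m) ^ q 0 * z 0 ^ m := by ring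
      _ = z' 0 ^ m := by rw [hmu, h0]
  · rw [pow_mul, hmu, hj j hj0]

/-- Injectivity of the map `ℝP(q₀, m q₁, …, m qₙ) → ℝP(q₀, …, qₙ)` induced by
`(z₀, z₁, …, zₙ) ↦ (z₀^m, z₁, …, zₙ)`, when `m` is odd. -/
theorem real_power_map_injective_odd (n m : ℕ) (hm : 0 < m) (hmodd : Odd m)
    (q : Fin (n + 1) → ℕ) (hq : ∀ i, 0 < q i)
    (z z' : Fin (n + 1) → ℝ) (hz : z ≠ 0) (hz' : z' ≠ 0)
    (h : ∃ l : ℝ, l ≠ 0 ∧ l ^ q 0 * (z 0) ^ m = (z' 0) ^ m ∧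
      ∀ j, j ≠ 0 → l ^ q j * z j = z' j) :
    ∃ mu : ℝ, mu ≠ 0 ∧ mu ^ q 0 * z 0 = z' 0 ∧
      ∀ j, j ≠ 0 → mu ^ (m * q j) * z j = z' j :=
  real_power_map_injective_odd_general n m hmodd q z z' h
end

section
/- Let m be even, q_0 odd, and q_1,…,q_n all even; set p = (q_0, m q_1, …, m q_n) and q = (q_0,…,q_n). For z, z' ∈ ℝ^{n+1}∖{0}: if there exists λ ∈ ℝ∖{0} with λ^{q_0} z_0^m = (z'_0)^m and λ^{q_j} z_j = z'_j for j = 1,…,n, then there exists μ ∈ ℝ∖{0} with μ^{q_0} z_0 = z'_0 and μ^{m q_j} z_j = z'_j for j = 1,…,n. -/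
/-- Injectivity of the map `ℝP(q₀, m q₁, …, m qₙ) → ℝP(q₀, …, qₙ)` induced by
`(z₀, z₁, …, zₙ) ↦ (z₀^m, z₁, …, zₙ)`, when `m` is even, `q₀` is odd and
`q₁, …, qₙ` are all even. -/
theorem real_power_map_injective_even (n m : ℕ) (hm : 0 < m) (hmeven : Even m)
    (q : Fin (n + 1) → ℕ) (hq : ∀ i, 0 < q i) (hq0 : Odd (q 0))
    (hqeven : ∀ j, j ≠ 0 → Even (q j))
    (z z' : Fin (n + 1) → ℝ) (hz : z ≠ 0) (hz' : z' ≠ 0)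
    (h : ∃ l : ℝ, l ≠ 0 ∧ l ^ q 0 * (z 0) ^ m = (z' 0) ^ m ∧
      ∀ j, j ≠ 0 → l ^ q j * z j = z' j) :
    ∃ mu : ℝ, mu ≠ 0 ∧ mu ^ q 0 * z 0 = z' 0 ∧
      ∀ j, j ≠ 0 → mu ^ (m * q j) * z j = z' j := by
  obtain ⟨l, hl, h0, hj⟩ := h
  have hl' : 0 < |l| := abs_pos.mpr hl
  set r : ℝ := |l| ^ ((m : ℝ)⁻¹) with hr
  have hrpos : 0 < r := Real.rpow_pos_of_pos hl' _
  have hrm : r ^ m = |l| := Real.rpow_inv_natCast_pow hl'.le hm.ne'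
  have hjgen : ∀ s : ℝ, s = 1 ∨ s = -1 → ∀ j : Fin (n + 1), j ≠ 0 →
      (s * r) ^ (m * q j) * z j = z' j := by
    intro s hs j hj0
    have hsm : s ^ m = 1 := by
      rcases hs with rfl | rfl
      · simp
      · exact hmeven.neg_one_pow
    have : (s * r) ^ (m * q j) = l ^ q j := by
      rw [pow_mul, mul_pow, hsm, one_mul, hrm, (hqeven j hj0).pow_abs]
    rw [this, hj j hj0]
  by_cases hz0 : z 0 = 0
  · have hz'0 : z' 0 = 0 := by
      have : (z' 0) ^ m = 0 := by rw [← h0, hz0]; simp [hm.ne']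
      exact pow_eq_zero_iff hm.ne' |>.mp this
    exact ⟨r, hrpos.ne', by simp [hz0, hz'0], by simpa using hjgen 1 (Or.inl rfl)⟩
  · set c : ℝ := z' 0 / z 0 with hc
    have hz'0 : z' 0 ≠ 0 := by
      intro hzz
      have : l ^ q 0 * (z 0) ^ m = 0 := by rw [h0, hzz]; simp [hm.ne']
      rcases mul_eq_zero.mp this with h1 | h2
      · exact hl (pow_eq_zero_iff (hq 0).ne' |>.mp h1)
      · exact hz0 (pow_eq_zero_iff hm.ne' |>.mp h2)
    have hcne : c ≠ 0 := div_ne_zero hz'0 hz0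
    have hcm : c ^ m = l ^ q 0 := by
      rw [hc, div_pow, ← h0, mul_div_assoc, div_self (pow_ne_zero _ hz0), mul_one]
    have habs : |c| = r ^ q 0 := by
      have h1 : |c| ^ m = (r ^ q 0) ^ m := by
        rw [← abs_pow, hcm, abs_pow, ← pow_mul, mul_comm (q 0) m, pow_mul, hrm]
      exact (pow_left_inj₀ (abs_nonneg c) (pow_nonneg hrpos.le _) hm.ne').mp h1
    obtain ⟨s, hs, hsc⟩ : ∃ s : ℝ, (s = 1 ∨ s = -1) ∧ s * |c| = c := by
      rcases lt_or_gt_of_ne hcne with hneg | hpos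
      · exact ⟨-1, Or.inr rfl, by rw [abs_of_neg hneg]; ring⟩
      · exact ⟨1, Or.inl rfl, by rw [abs_of_pos hpos, one_mul]⟩
    refine ⟨s * r, ?_, ?_, hjgen s hs⟩
    · rcases hs with rfl | rfl <;> simp [hrpos.ne']
    · have hsq : s ^ q 0 = s := by
        rcases hs with rfl | rfl
        · simp
        · exact hq0.neg_one_pow
      rw [mul_pow, hsq, ← habs, hsc, hc, div_mul_cancel₀ _ hz0]
end

section
/- If p_0 is odd, then ℝP(p_0, p_1) is reconstructible via the axis projection c_{01}([z_0:z_1]) = [z_0^{p_1} : z_1^{p_0}]: for z, z' ∈ ℝ^2 with all coordinates nonzero, if there exists λ ∈ ℝ∖{0} with (z'_0)^{p_1} = λ z_0^{p_1} and (z'_1)^{p_0} = λ z_1^{p_0}, then there exists μ ∈ ℝ∖{0} with μ^{p_0} z_0 = z'_0 and μ^{p_1} z_1 = z'_1. -/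
/-- If `p₀` is odd then `ℝP(p₀,p₁)` is reconstructible via the axis projection
`[z₀:z₁] ↦ [z₀^{p₁} : z₁^{p₀}]`. -/
theorem reconstructible_odd_first_weight (p₀ p₁ : ℕ) (hp₀ : 0 < p₀) (hp₁ : 0 < p₁)
    (hodd : Odd p₀) (z₀ z₁ z₀' z₁' : ℝ)
    (h₀ : z₀ ≠ 0) (h₁ : z₁ ≠ 0) (h₀' : z₀' ≠ 0) (h₁' : z₁' ≠ 0)
    (h : ∃ l : ℝ, l ≠ 0 ∧ z₀' ^ p₁ = l * z₀ ^ p₁ ∧ z₁' ^ p₀ = l * z₁ ^ p₀) :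
    ∃ mu : ℝ, mu ≠ 0 ∧ mu ^ p₀ * z₀ = z₀' ∧ mu ^ p₁ * z₁ = z₁' := by
  obtain ⟨l, hl, hA, hB⟩ := h
  set r : ℝ := z₀' / z₀ with hr
  have hrne : r ≠ 0 := div_ne_zero h₀' h₀
  set mu : ℝ := Real.sign r * |r| ^ ((p₀ : ℝ)⁻¹) with hmu
  have habs : (0 : ℝ) < |r| := abs_pos.mpr hrne
  have hpow : mu ^ p₀ = r := by
    have h1 : (Real.sign r) ^ p₀ = Real.sign r := by
      rcases Real.sign_apply_eq r with h' | h' | h' <;> rw [h'] <;>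
        simp [hodd.neg_one_pow, hp₀.ne']
    have h2 : (|r| ^ ((p₀ : ℝ)⁻¹)) ^ p₀ = |r| := by
      rw [← Real.rpow_natCast (|r| ^ ((p₀ : ℝ)⁻¹)) p₀, ← Real.rpow_mul habs.le,
        inv_mul_cancel₀ (by exact_mod_cast hp₀.ne'), Real.rpow_one]
    rw [hmu, mul_pow, h1, h2]
    rcases lt_or_gt_of_ne hrne with hlt | hgt
    · rw [Real.sign_of_neg hlt, abs_of_neg hlt]; ring
    · rw [Real.sign_of_pos hgt, abs_of_pos hgt]; ring
  have hmune : mu ≠ 0 := by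
    intro h'
    rw [h', zero_pow hp₀.ne'] at hpow
    exact hrne hpow.symm
  refine ⟨mu, hmune, ?_, ?_⟩
  · rw [hpow, hr, div_mul_cancel₀ _ h₀]
  · have hinj : Function.Injective fun x : ℝ => x ^ p₀ := hodd.strictMono_pow.injective
    have key : (mu ^ p₁) ^ p₀ = (z₁' / z₁) ^ p₀ := by
      rw [← pow_mul, mul_comm, pow_mul, hpow, hr, div_pow, hA, div_pow, hB,
        mul_div_assoc, mul_div_assoc, div_self (pow_ne_zero _ h₀),
        div_self (pow_ne_zero _ h₁)]
    have := hinj key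
    rw [this, div_mul_cancel₀ _ h₁]
end

section
/- If p_0 and p_1 are both even, then ℝP(p_0, p_1) is not reconstructible: for every axis projection c_{01} induced by (z_0,z_1) ↦ (z_0^a, z_1^b) with p_0 a = p_1 b, there exist z, z' ∈ ℝ^2 with all coordinates nonzero such that (z_0^a, z_1^b) ∼_{(1,1)} ((z'_0)^a, (z'_1)^b) but z is not ∼_{(p_0,p_1)}-equivalent to z'. -/
/-!
With both weights even, `λ ^ p₀` and `λ ^ p₁` are positive, so the `∼_{(p₀,p₁)}`-class of `(1, 1)`
stays in the open positive quadrant. On the other hand, for any exponents `a`, `b` some sign vector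
`z' ∈ {±1}²` other than `(1, 1)` has `z'₀ ^ a = z'₁ ^ b`, so its image is `∼_{(1,1)}`-equivalent to
the image `(1, 1)` of `(1, 1)`.
-/

lemma exists_pow_eq_pow_and_neg (a b : ℕ) :
    ∃ x y : ℝ, x ≠ 0 ∧ y ≠ 0 ∧ (x < 0 ∨ y < 0) ∧ x ^ a = y ^ b := by
  rcases Nat.even_or_odd a with ha | ha
  · exact ⟨-1, 1, by norm_num, by norm_num, by norm_num, by simp [ha.neg_one_pow]⟩
  rcases Nat.even_or_odd b with hb | hb
  · exact ⟨1, -1, by norm_num, by norm_num, by norm_num, by simp [hb.neg_one_pow]⟩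
  · exact ⟨-1, -1, by norm_num, by norm_num, by norm_num,
      by simp [ha.neg_one_pow, hb.neg_one_pow]⟩

theorem not_reconstructible_both_even_general (p₀ p₁ a b : ℕ)
    (he₀ : Even p₀) (he₁ : Even p₁) :
    ∃ z₀ z₁ z₀' z₁' : ℝ, z₀ ≠ 0 ∧ z₁ ≠ 0 ∧ z₀' ≠ 0 ∧ z₁' ≠ 0 ∧
      (∃ l : ℝ, l ≠ 0 ∧ z₀' ^ a = l * z₀ ^ a ∧ z₁' ^ b = l * z₁ ^ b) ∧
      ¬ ∃ l : ℝ, l ≠ 0 ∧ z₀' = l ^ p₀ * z₀ ∧ z₁' = l ^ p₁ * z₁ := by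
  obtain ⟨x, y, hx, hy, hneg, hxy⟩ := exists_pow_eq_pow_and_neg a b
  refine ⟨1, 1, x, y, one_ne_zero, one_ne_zero, hx, hy,
    ⟨x ^ a, pow_ne_zero a hx, by simp, by simp [hxy]⟩, ?_⟩
  rintro ⟨l, hl, rfl, rfl⟩
  rcases hneg with h | h
  · exact (he₀.pow_pos hl).not_gt (by simpa using h)
  · exact (he₁.pow_pos hl).not_gt (by simpa using h)

/-- If `p₀` and `p₁` are both even, `ℝP(p₀,p₁)` is not reconstructible: for any
axis projection `(z₀,z₁) ↦ (z₀^a, z₁^b)` with `p₀ a = p₁ b`, there are points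
with all coordinates nonzero, whose images are `∼_{(1,1)}`-equivalent but which
are not `∼_{(p₀,p₁)}`-equivalent. -/
theorem not_reconstructible_both_even (p₀ p₁ a b : ℕ)
    (hp₀ : 0 < p₀) (hp₁ : 0 < p₁) (ha : 0 < a) (hb : 0 < b)
    (he₀ : Even p₀) (he₁ : Even p₁) (hab : p₀ * a = p₁ * b) :
    ∃ z₀ z₁ z₀' z₁' : ℝ, z₀ ≠ 0 ∧ z₁ ≠ 0 ∧ z₀' ≠ 0 ∧ z₁' ≠ 0 ∧
      (∃ l : ℝ, l ≠ 0 ∧ z₀' ^ a = l * z₀ ^ a ∧ z₁' ^ b = l * z₁ ^ b) ∧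
      ¬ ∃ l : ℝ, l ≠ 0 ∧ z₀' = l ^ p₀ * z₀ ∧ z₁' = l ^ p₁ * z₁ :=
  not_reconstructible_both_even_general p₀ p₁ a b he₀ he₁
end

section
/- For any positive integers q_0, q_1, the axis projection h_{01}: ℂP(q_0, q_1) → ℂP^1 given by [z_0 : z_1] ↦ [z_0^{lcm(q_0,q_1)/q_0} : z_1^{lcm(q_0,q_1)/q_1}] is injective on all of ℂP(q_0, q_1): for z, z' ∈ ℂ^2∖{0}, if (z_0^{ℓ/q_0}, z_1^{ℓ/q_1}) and ((z'_0)^{ℓ/q_0}, (z'_1)^{ℓ/q_1}) differ by a nonzero scalar multiple (where ℓ = lcm(q_0,q_1)), then z ∼_{(q_0,q_1)} z'. -/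
/-- The axis projection `h₀₁ : ℂP(q₀,q₁) → ℂP¹`,
`[z₀:z₁] ↦ [z₀^{ℓ/q₀} : z₁^{ℓ/q₁}]` with `ℓ = lcm(q₀,q₁)`, is injective on all
of `ℂP(q₀,q₁)`. -/
theorem complex_axis_projection_injective (q₀ q₁ : ℕ) (hq₀ : 0 < q₀) (hq₁ : 0 < q₁)
    (z₀ z₁ z₀' z₁' : ℂ) (hz : ¬(z₀ = 0 ∧ z₁ = 0)) (hz' : ¬(z₀' = 0 ∧ z₁' = 0))
    (h : ∃ l : ℂ, l ≠ 0 ∧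
      z₀' ^ (Nat.lcm q₀ q₁ / q₀) = l * z₀ ^ (Nat.lcm q₀ q₁ / q₀) ∧
      z₁' ^ (Nat.lcm q₀ q₁ / q₁) = l * z₁ ^ (Nat.lcm q₀ q₁ / q₁)) :
    ∃ mu : ℂ, mu ≠ 0 ∧ z₀' = mu ^ q₀ * z₀ ∧ z₁' = mu ^ q₁ * z₁ := by
  obtain ⟨l, hl, h0, h1⟩ := h
  set g := Nat.gcd q₀ q₁ with hg
  have hgpos : 0 < g := Nat.gcd_pos_of_pos_left _ hq₀
  set a := Nat.lcm q₀ q₁ / q₀ with ha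
  set b := Nat.lcm q₀ q₁ / q₁ with hb
  have haq : a = q₁ / g := by
    rw [ha, Nat.lcm, Nat.mul_div_assoc _ (Nat.gcd_dvd_right q₀ q₁),
      Nat.mul_div_cancel_left _ hq₀]
  have hbq : b = q₀ / g := by
    rw [hb, Nat.lcm, Nat.mul_comm q₀ q₁, Nat.mul_div_assoc _ (Nat.gcd_dvd_left q₀ q₁)]
    exact Nat.mul_div_cancel_left _ hq₁
  have hapos : 0 < a := by
    rw [haq]; exact Nat.div_pos (Nat.le_of_dvd hq₁ (Nat.gcd_dvd_right q₀ q₁)) hgpos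
  have hbpos : 0 < b := by
    rw [hbq]; exact Nat.div_pos (Nat.le_of_dvd hq₀ (Nat.gcd_dvd_left q₀ q₁)) hgpos
  have hq0gb : q₀ = g * b := by rw [hbq]; exact (Nat.mul_div_cancel' (Nat.gcd_dvd_left q₀ q₁)).symm
  have hq1ga : q₁ = g * a := by rw [haq]; exact (Nat.mul_div_cancel' (Nat.gcd_dvd_right q₀ q₁)).symm
  have hcop : Nat.Coprime a b := by
    rw [haq, hbq]; exact (Nat.coprime_div_gcd_div_gcd hgpos).symm
  by_cases hz₀ : z₀ = 0
  · have hz₁ : z₁ ≠ 0 := fun hh => hz ⟨hz₀, hh⟩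
    have hz₀' : z₀' = 0 := by
      have := h0; rw [hz₀, zero_pow hapos.ne'] at this
      simpa [mul_zero] using pow_eq_zero_iff hapos.ne' |>.mp (by simpa using this)
    have hz₁' : z₁' ≠ 0 := by
      intro hh
      rw [hh, zero_pow hbpos.ne'] at h1
      exact (mul_ne_zero hl (pow_ne_zero _ hz₁)) h1.symm
    obtain ⟨mu, hmu⟩ := Complex.isAlgClosed.exists_pow_nat_eq (z₁' / z₁) hq₁
    have hmune : mu ≠ 0 := by
      intro hh; rw [hh, zero_pow hq₁.ne'] at hmu
      exact (div_ne_zero hz₁' hz₁) hmu.symm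
    exact ⟨mu, hmune, by rw [hz₀, hz₀', mul_zero], by rw [hmu, div_mul_cancel₀ _ hz₁]⟩
  by_cases hz₁ : z₁ = 0
  · have hz₁' : z₁' = 0 := by
      have := h1; rw [hz₁, zero_pow hbpos.ne'] at this
      simpa [mul_zero] using pow_eq_zero_iff hbpos.ne' |>.mp (by simpa using this)
    have hz₀' : z₀' ≠ 0 := by
      intro hh
      rw [hh, zero_pow hapos.ne'] at h0
      exact (mul_ne_zero hl (pow_ne_zero _ hz₀)) h0.symm
    obtain ⟨mu, hmu⟩ := Complex.isAlgClosed.exists_pow_nat_eq (z₀' / z₀) hq₀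
    have hmune : mu ≠ 0 := by
      intro hh; rw [hh, zero_pow hq₀.ne'] at hmu
      exact (div_ne_zero hz₀' hz₀) hmu.symm
    exact ⟨mu, hmune, by rw [hmu, div_mul_cancel₀ _ hz₀], by rw [hz₁, hz₁', mul_zero]⟩
  -- main case
  have hz₀' : z₀' ≠ 0 := by
    intro hh; rw [hh, zero_pow hapos.ne'] at h0
    exact (mul_ne_zero hl (pow_ne_zero _ hz₀)) h0.symm
  have hz₁' : z₁' ≠ 0 := by
    intro hh; rw [hh, zero_pow hbpos.ne'] at h1
    exact (mul_ne_zero hl (pow_ne_zero _ hz₁)) h1.symm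
  set u : ℂ := z₀' / z₀ with hu
  set v : ℂ := z₁' / z₁ with hv
  have hune : u ≠ 0 := div_ne_zero hz₀' hz₀
  have hvne : v ≠ 0 := div_ne_zero hz₁' hz₁
  have hua : u ^ a = l := by rw [hu, div_pow, h0, mul_div_assoc, div_self (pow_ne_zero _ hz₀), mul_one]
  have hvb : v ^ b = l := by rw [hv, div_pow, h1, mul_div_assoc, div_self (pow_ne_zero _ hz₁), mul_one]
  have huv : u ^ (a : ℤ) = v ^ (b : ℤ) := by
    rw [zpow_natCast, zpow_natCast, hua, hvb]
  set s : ℤ := Nat.gcdA a b with hs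
  set t : ℤ := Nat.gcdB a b with ht
  have hst : (a : ℤ) * s + (b : ℤ) * t = 1 := by
    have := Nat.gcd_eq_gcd_ab a b
    rw [hcop] at this
    exact_mod_cast this.symm
  set c : ℂ := u ^ t * v ^ s with hc
  have hcne : c ≠ 0 := mul_ne_zero (zpow_ne_zero _ hune) (zpow_ne_zero _ hvne)
  obtain ⟨mu, hmu⟩ := Complex.isAlgClosed.exists_pow_nat_eq c hgpos
  have hmune : mu ≠ 0 := by
    intro hh; rw [hh, zero_pow hgpos.ne'] at hmu; exact hcne hmu.symm
  have hcb : c ^ (b : ℤ) = u := by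
    have e1 : (u ^ t) ^ (b : ℤ) = u ^ ((b : ℤ) * t) := by rw [← zpow_mul, mul_comm]
    have e2 : (v ^ s) ^ (b : ℤ) = u ^ ((a : ℤ) * s) := by
      rw [← zpow_mul, mul_comm s, zpow_mul, ← huv, ← zpow_mul]
    rw [hc, mul_zpow, e1, e2, ← zpow_add₀ hune, add_comm, hst, zpow_one]
  have hca : c ^ (a : ℤ) = v := by
    have e1 : (v ^ s) ^ (a : ℤ) = v ^ ((a : ℤ) * s) := by rw [← zpow_mul, mul_comm]
    have e2 : (u ^ t) ^ (a : ℤ) = v ^ ((b : ℤ) * t) := by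
      rw [← zpow_mul, mul_comm t, zpow_mul, huv, ← zpow_mul]
    rw [hc, mul_zpow, e2, e1, ← zpow_add₀ hvne, add_comm, hst, zpow_one]
  have hmu0 : mu ^ q₀ = u := by
    rw [hq0gb, pow_mul, hmu, ← zpow_natCast c b, hcb]
  have hmu1 : mu ^ q₁ = v := by
    rw [hq1ga, pow_mul, hmu, ← zpow_natCast c a, hca]
  refine ⟨mu, hmune, ?_, ?_⟩
  · rw [hmu0, hu, div_mul_cancel₀ _ hz₀]
  · rw [hmu1, hv, div_mul_cancel₀ _ hz₁]
end

section
/- Let p_0, p_i, p_j, k_i, k_j be integers with p_0 > 0, and ℓ_{ij} = lcm(p_i,p_j), g_{ij} = gcd(p_i,p_j). If k_i ℓ_{ij} ≡ k_j ℓ_{ij} (mod p_0), then k_i ≡ k_j (mod gcd(lcm(p_0,p_i)/p_i, lcm(p_0,p_j)/p_j)). -/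
/-!
Put `n = kᵢ - kⱼ` and `ℓ = lcm pᵢ pⱼ`. Since `pᵢ ∣ ℓ`, the hypothesis `p₀ ∣ n ℓ` upgrades to
`lcm p₀ pᵢ ∣ n ℓ`, i.e. `lcm p₀ pᵢ / pᵢ ∣ n (ℓ / pᵢ)`, and likewise for `j`. The cofactors
`ℓ / pᵢ = pⱼ / g` and `ℓ / pⱼ = pᵢ / g` (with `g = gcd pᵢ pⱼ`) are coprime, so a common divisor of the two moduli divides `n`.
-/

theorem IsCoprime.dvd_of_dvd_mul_of_dvd_mul {R : Type*} [CommRing R] {d n a b : R}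
    (hab : IsCoprime a b) (ha : d ∣ n * a) (hb : d ∣ n * b) : d ∣ n := by
  obtain ⟨u, v, huv⟩ := hab
  have hn : n = u * (n * a) + v * (n * b) := by linear_combination -n * huv
  rw [hn]
  exact dvd_add (ha.mul_left u) (hb.mul_left v)

theorem Nat.lcm_div_left_eq_div_gcd (a b : ℕ) (ha : 0 < a) :
    Nat.lcm a b / a = b / Nat.gcd a b := by
  rw [Nat.lcm, Nat.mul_div_assoc a (Nat.gcd_dvd_right a b), Nat.mul_div_cancel_left _ ha]

theorem Nat.coprime_lcm_div_left_lcm_div_right {a b : ℕ} (ha : 0 < a) (hb : 0 < b) :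
    Nat.Coprime (Nat.lcm a b / a) (Nat.lcm a b / b) := by
  rw [Nat.lcm_div_left_eq_div_gcd a b ha, Nat.lcm_comm, Nat.lcm_div_left_eq_div_gcd b a hb,
    Nat.gcd_comm b a, Nat.coprime_comm]
  exact Nat.coprime_div_gcd_div_gcd (Nat.gcd_pos_of_pos_left b ha)

theorem lcm_div_dvd_mul_div_of_dvd_mul {p₀ p m : ℕ} (hp : p ≠ 0) (hpm : p ∣ m) {n : ℤ}
    (h : (p₀ : ℤ) ∣ n * m) : ((Nat.lcm p₀ p / p : ℕ) : ℤ) ∣ n * (m / p : ℕ) := by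
  have hlcm : ((Nat.lcm p₀ p : ℕ) : ℤ) ∣ n * m :=
    Int.lcm_natCast_natCast p₀ p ▸
      Int.coe_lcm_dvd h (dvd_mul_of_dvd_right (Int.natCast_dvd_natCast.2 hpm) n)
  have hp' : (p : ℤ) ≠ 0 := Int.natCast_ne_zero.2 hp
  rw [← mul_dvd_mul_iff_right hp', mul_assoc, ← Nat.cast_mul, ← Nat.cast_mul,
    Nat.div_mul_cancel (Nat.dvd_lcm_right p₀ p), Nat.div_mul_cancel hpm]
  exact hlcm

theorem congruence_compatibility_general (p₀ pi pj : ℕ) (hpi : 0 < pi)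
    (hpj : 0 < pj) (ki kj : ℤ)
    (h : (p₀ : ℤ) ∣ ki * (Nat.lcm pi pj : ℤ) - kj * (Nat.lcm pi pj : ℤ)) :
    ((Nat.gcd (Nat.lcm p₀ pi / pi) (Nat.lcm p₀ pj / pj) : ℤ)) ∣ ki - kj := by
  rw [← sub_mul] at h
  have hi := lcm_div_dvd_mul_div_of_dvd_mul hpi.ne' (Nat.dvd_lcm_left pi pj) h
  have hj := lcm_div_dvd_mul_div_of_dvd_mul hpj.ne' (Nat.dvd_lcm_right pi pj) h
  have hcop : IsCoprime ((Nat.lcm pi pj / pi : ℕ) : ℤ) ((Nat.lcm pi pj / pj : ℕ) : ℤ) :=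
    Nat.isCoprime_iff_coprime.2 (Nat.coprime_lcm_div_left_lcm_div_right hpi hpj)
  exact hcop.dvd_of_dvd_mul_of_dvd_mul
    ((Int.natCast_dvd_natCast.2 (Nat.gcd_dvd_left _ _)).trans hi)
    ((Int.natCast_dvd_natCast.2 (Nat.gcd_dvd_right _ _)).trans hj)

/-- If `kᵢ ℓᵢⱼ ≡ kⱼ ℓᵢⱼ (mod p₀)` where `ℓᵢⱼ = lcm(pᵢ,pⱼ)`, then
`kᵢ ≡ kⱼ (mod gcd(lcm(p₀,pᵢ)/pᵢ, lcm(p₀,pⱼ)/pⱼ))`. -/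
theorem congruence_compatibility (p₀ pi pj : ℕ) (hp₀ : 0 < p₀) (hpi : 0 < pi)
    (hpj : 0 < pj) (ki kj : ℤ)
    (h : (p₀ : ℤ) ∣ ki * (Nat.lcm pi pj : ℤ) - kj * (Nat.lcm pi pj : ℤ)) :
    ((Nat.gcd (Nat.lcm p₀ pi / pi) (Nat.lcm p₀ pj / pj) : ℤ)) ∣ ki - kj :=
  congruence_compatibility_general p₀ pi pj hpi hpj ki kj h
end

section
/- Let p_0 be an odd positive integer and p = (p_0, p_1, …, p_n) a weight. If z, z' ∈ ℝ^{n+1} have all coordinates nonzero and for each j = 1,…,n there exists λ_j ∈ ℝ∖{0} with z_0^{a_{0j}} = λ_j (z'_0)^{a_{0j}} and z_j^{b_{0j}} = λ_j (z'_j)^{b_{0j}}, where a_{0j} = lcm(p_0,p_j)/p_0 and b_{0j} = lcm(p_0,p_j)/p_j, then there exists μ ∈ ℝ∖{0} with μ^{p_j} z'_j = z_j for all j = 0,…,n. (Hence ℝP(p) is reconstructible whenever some weight entry is odd.) -/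
/-!
Take for `μ` the real `p₀`-th root of `z₀ / z'₀`, which exists because `p₀` is odd.
The relation on the `0`-th coordinate then forces `λⱼ = μ ^ lcm(p₀, pⱼ)`, so the relation
on the `j`-th coordinate reads `zⱼ ^ b₀ⱼ = (μ ^ pⱼ * z'ⱼ) ^ b₀ⱼ`. Since `b₀ⱼ` divides `p₀`,
it is odd, and odd powers are injective on `ℝ`.
-/

lemma Real.exists_pow_eq_of_odd {k : ℕ} (hk : Odd k) (c : ℝ) : ∃ x : ℝ, x ^ k = c := by
  have hk0 : k ≠ 0 := by rintro rfl; simp at hk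
  rcases le_or_gt 0 c with hc | hc
  · exact ⟨c ^ (k : ℝ)⁻¹, rpow_inv_natCast_pow hc hk0⟩
  · refine ⟨-(-c) ^ (k : ℝ)⁻¹, ?_⟩
    rw [hk.neg_pow, rpow_inv_natCast_pow (by linarith) hk0, neg_neg]

lemma Nat.lcm_div_right_dvd_left {a b : ℕ} (hb : 0 < b) : a.lcm b / b ∣ a :=
  (Nat.div_dvd_iff_dvd_mul (Nat.dvd_lcm_right a b) hb).mpr (mul_comm a b ▸ Nat.lcm_dvd_mul a b)

lemma pow_mul_eq_of_lcm_relations {K : Type*} [CommRing K] [LinearOrder K]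
    [IsStrictOrderedRing K] {q₀ q : ℕ} (hq : 0 < q) (hq₀ : Odd q₀)
    {μ l x₀ x₀' x x' : K} (hx₀' : x₀' ≠ 0) (h₀ : μ ^ q₀ * x₀' = x₀)
    (ha : x₀ ^ (q₀.lcm q / q₀) = l * x₀' ^ (q₀.lcm q / q₀))
    (hb : x ^ (q₀.lcm q / q) = l * x' ^ (q₀.lcm q / q)) :
    μ ^ q * x' = x := by
  have hl : l = μ ^ q₀.lcm q := by
    rw [← h₀, mul_pow, ← pow_mul, Nat.mul_div_cancel' (Nat.dvd_lcm_left q₀ q)] at ha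
    exact (mul_right_cancel₀ (pow_ne_zero _ hx₀') ha).symm
  have hb_odd : Odd (q₀.lcm q / q) := hq₀.of_dvd_nat (Nat.lcm_div_right_dvd_left hq)
  refine (hb_odd.pow_inj.mp ?_).symm
  rw [hb, hl, mul_pow, ← pow_mul, Nat.mul_div_cancel' (Nat.dvd_lcm_right q₀ q)]

/-- If `p₀` is odd, `ℝP(p)` is reconstructible: if all coordinates of `z, z'`
are nonzero and for each `j ≠ 0` the axis projections agree,
`z₀^{a₀ⱼ} = λⱼ (z'₀)^{a₀ⱼ}` and `zⱼ^{b₀ⱼ} = λⱼ (z'ⱼ)^{b₀ⱼ}`, where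
`a₀ⱼ = lcm(p₀,pⱼ)/p₀` and `b₀ⱼ = lcm(p₀,pⱼ)/pⱼ`, then there is `μ ≠ 0` with
`μ^{pⱼ} z'ⱼ = zⱼ` for all `j`. -/
theorem real_reconstructible_odd_entry (n : ℕ) (p : Fin (n + 1) → ℕ)
    (hp : ∀ i, 0 < p i) (hodd : Odd (p 0))
    (z z' : Fin (n + 1) → ℝ) (hz : ∀ i, z i ≠ 0) (hz' : ∀ i, z' i ≠ 0)
    (h : ∀ j : Fin (n + 1), j ≠ 0 → ∃ l : ℝ, l ≠ 0 ∧
      (z 0) ^ (Nat.lcm (p 0) (p j) / p 0) = l * (z' 0) ^ (Nat.lcm (p 0) (p j) / p 0) ∧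
      (z j) ^ (Nat.lcm (p 0) (p j) / p j) = l * (z' j) ^ (Nat.lcm (p 0) (p j) / p j)) :
    ∃ mu : ℝ, mu ≠ 0 ∧ ∀ j : Fin (n + 1), mu ^ p j * z' j = z j := by
  obtain ⟨mu, hmu⟩ := Real.exists_pow_eq_of_odd hodd (z 0 / z' 0)
  have hmu_ne : mu ≠ 0 := by
    rintro rfl
    rw [zero_pow (hp 0).ne'] at hmu
    exact div_ne_zero (hz 0) (hz' 0) hmu.symm
  have h₀ : mu ^ p 0 * z' 0 = z 0 := by rw [hmu, div_mul_cancel₀ _ (hz' 0)]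
  refine ⟨mu, hmu_ne, fun j => ?_⟩
  rcases eq_or_ne j 0 with rfl | hj
  · exact h₀
  obtain ⟨l, -, ha, hb⟩ := h j hj
  exact pow_mul_eq_of_lcm_relations (hp j) hodd (hz' 0) h₀ ha hb
end
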